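/- Every Γ-partition is a P-position in LCTR: for all integers n > 1 and s > 0, SG((n, 1ˢ)) = 0, where (n, 1ˢ) is the partition with one part equal to n followed by s parts equal to 1. -/

import Mathlib

/-- Remove the left column of a Young diagram: subtract 1 from each part and
omit nonpositive values. -/
def leftCol (l : List ℕ) : List ℕ := (l.map (· - 1)).filter (0 < ·)

/-- Remove the top row of a Young diagram. -/
def topRow (l : List ℕ) : List ℕ := l.tail

/-- Minimum excluded value of a set of naturals. -/
noncomputable def mex (s : Set ℕ) : ℕ := sInf {n | n ∉ s}

def wt (l : List ℕ) : ℕ := l.sum + l.length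

lemma wt_leftCol_le (l : List ℕ) : wt (leftCol l) ≤ l.sum := by
  induction l with
  | nil => simp [leftCol, wt]
  | cons a t ih =>
    simp only [leftCol, wt] at ih ⊢
    rw [List.map_cons, List.filter_cons]
    by_cases h : 0 < a - 1
    · simp only [h, decide_true, if_true, List.sum_cons, List.length_cons]
      omega
    · simp only [h, decide_false, Bool.false_eq_true, if_false, List.sum_cons]
      omega

lemma wt_leftCol_lt (l : List ℕ) (h : l ≠ []) : wt (leftCol l) < wt l := by
  have h1 := wt_leftCol_le l
  have h2 : 0 < l.length := List.length_pos_iff.mpr h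
  unfold wt at *
  omega

lemma wt_topRow_lt (l : List ℕ) (h : l ≠ []) : wt (topRow l) < wt l := by
  cases l with
  | nil => exact absurd rfl h
  | cons a t => simp [topRow, wt]; omega

/-- The Sprague–Grundy value of a position in the LCTR game. -/
noncomputable def SG (l : List ℕ) : ℕ :=
  if h : l = [] then 0
  else mex {SG (leftCol l), SG (topRow l)}
termination_by wt l
decreasing_by
  · exact wt_leftCol_lt l h
  · exact wt_topRow_lt l h

/-- A partition: a non-increasing list of positive integers. -/
def IsPartition (l : List ℕ) : Prop := l.Pairwise (· ≥ ·) ∧ ∀ x ∈ l, 0 < x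

/-- The conjugate partition: the `j`-th part (for `1 ≤ j ≤ l₁`) is the number
of parts of `l` that are at least `j`. -/
def conj (l : List ℕ) : List ℕ :=
  (List.range (l.headD 0)).map (fun j => l.countP (fun x => decide (j < x)))

/-!
A position is a P-position exactly when neither of its two options is one. The options of
`(n, 1ˢ)` are the single row `(n - 1)` and the single column `(1ˢ)`; each of these has the empty
partition (a P-position) as an option, so neither is a P-position.
-/

lemma mex_eq_zero_iff {s : Set ℕ} (hs : s ≠ Set.univ) : mex s = 0 ↔ 0 ∉ s := by
  have hcompl : {n | n ∉ s}.Nonempty := (Set.ne_univ_iff_exists_notMem s).mp hs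
  rw [mex, Nat.sInf_eq_zero, or_iff_left hcompl.ne_empty, Set.mem_ofPred_eq]

lemma mex_pair_eq_zero_iff (a b : ℕ) : mex {a, b} = 0 ↔ a ≠ 0 ∧ b ≠ 0 := by
  have hfin : ({a, b} : Set ℕ).Finite := Set.toFinite _
  rw [mex_eq_zero_iff (fun h => Set.infinite_univ (h ▸ hfin))]
  simp only [Set.mem_insert_iff, Set.mem_singleton_iff, not_or, ne_comm]

lemma SG_nil : SG [] = 0 := by
  rw [SG, dif_pos rfl]

lemma SG_eq_zero_iff {l : List ℕ} (hl : l ≠ []) :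
    SG l = 0 ↔ SG (leftCol l) ≠ 0 ∧ SG (topRow l) ≠ 0 := by
  rw [SG, dif_neg hl, mex_pair_eq_zero_iff]

lemma SG_ne_zero_of_leftCol_eq_nil {l : List ℕ} (hl : l ≠ []) (h : leftCol l = []) :
    SG l ≠ 0 := by
  simp [SG_eq_zero_iff hl, h, SG_nil]

lemma SG_ne_zero_of_topRow_eq_nil {l : List ℕ} (hl : l ≠ []) (h : topRow l = []) :
    SG l ≠ 0 := by
  simp [SG_eq_zero_iff hl, h, SG_nil]

lemma SG_singleton_ne_zero (m : ℕ) : SG [m] ≠ 0 :=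
  SG_ne_zero_of_topRow_eq_nil (List.cons_ne_nil m []) rfl

lemma leftCol_replicate_one (s : ℕ) : leftCol (List.replicate s 1) = [] := by
  simp [leftCol, List.map_replicate]

lemma SG_replicate_one_ne_zero {s : ℕ} (hs : s ≠ 0) : SG (List.replicate s 1) ≠ 0 :=
  SG_ne_zero_of_leftCol_eq_nil (by simpa using hs) (leftCol_replicate_one s)

lemma leftCol_cons_replicate_one {n : ℕ} (hn : 1 < n) (s : ℕ) :
    leftCol (n :: List.replicate s 1) = [n - 1] := by
  have hpos : 0 < n - 1 := by omega
  simp [leftCol, List.map_replicate, hpos]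

/-- Every Γ-partition `(n, 1ˢ)` with `n > 1` and `s > 0` is a P-position in
LCTR. -/
theorem SG_gamma (n s : ℕ) (hn : 1 < n) (hs : 0 < s) :
    SG (n :: List.replicate s 1) = 0 := by
  rw [SG_eq_zero_iff (List.cons_ne_nil _ _), leftCol_cons_replicate_one hn]
  exact ⟨SG_singleton_ne_zero (n - 1), SG_replicate_one_ne_zero hs.ne'⟩
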